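/- arXiv:1903.09444 — 2 statements merged into one kernel-verified Lean document; each statement's English description precedes it below -/
import Mathlib

section
/- Let φ be a perfect 2-coloring of Ci_∞(D_n) with positive outer degrees b, c satisfying b + c = 2n - 1. Then for every integer i with φ(i) ≠ φ(i+2), one has φ(i-2n+1) = φ(i) and φ(i+2n+1) = φ(i+2). -/
/-- Neighborhood of `i` in the infinite circulant graph `Ci_∞(D_n)`,
`D_n = {±1, ±3, …, ±(2n-1)}`: the integers at odd distance less than `2n` from `i`. -/
noncomputable def nbrs (n : ℕ) (i : ℤ) : Finset ℤ :=
  (Finset.Icc (i - (2*(n:ℤ) - 1)) (i + (2*(n:ℤ) - 1))).filter (fun j => Odd (j - i))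

/-- `φ` is a perfect 2-coloring of `Ci_∞(D_n)` with outer degrees `(b, c)`:
every vertex of color 0 (black) has exactly `b` neighbors of color 1 (white), and
every vertex of color 1 has exactly `c` neighbors of color 0. -/
def Perfect2 (n : ℕ) (φ : ℤ → Fin 2) (b c : ℕ) : Prop :=
  (∀ i, φ i = 0 → ((nbrs n i).filter (fun j => φ j = 1)).card = b) ∧
  (∀ i, φ i = 1 → ((nbrs n i).filter (fun j => φ j = 0)).card = c)
/-! The neighbourhoods of `i` and `i + 2` share all but one vertex each: `nbrs n (i + 2)` is
`nbrs n i` with `i - 2n + 1` traded for `i + 2n + 1`. If `i` and `i + 2` have different colours,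
every common neighbour is counted in exactly one of their two outer degrees, so
`b + c = (2n - 1) + [φ (i - 2n + 1) ≠ φ i] + [φ (i + 2n + 1) ≠ φ (i + 2)]`,
and `b + c = 2n - 1` forces both brackets to vanish. -/

lemma mem_nbrs {n : ℕ} {i j : ℤ} :
    j ∈ nbrs n i ↔ i - (2*(n:ℤ) - 1) ≤ j ∧ j ≤ i + (2*(n:ℤ) - 1) ∧ (j - i) % 2 = 1 := by
  simp [nbrs, Int.odd_iff, and_assoc]

lemma nbrs_zero (i : ℤ) : nbrs 0 i = ∅ := by
  ext j
  simp only [mem_nbrs, Finset.notMem_empty, iff_false]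
  omega

lemma nbrs_succ (n : ℕ) (i : ℤ) :
    nbrs (n + 1) i = insert (i - (2*(n:ℤ) + 1)) (insert (i + (2*(n:ℤ) + 1)) (nbrs n i)) := by
  ext j
  simp only [mem_nbrs, Finset.mem_insert]
  push_cast
  omega

lemma card_nbrs (n : ℕ) (i : ℤ) : (nbrs n i).card = 2 * n := by
  induction n with
  | zero => simp [nbrs_zero]
  | succ n ih =>
    rw [nbrs_succ, Finset.card_insert_of_notMem, Finset.card_insert_of_notMem, ih]
    · ring
    · simp only [mem_nbrs]; omega
    · simp only [Finset.mem_insert, mem_nbrs]; omega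

lemma sub_two_mul_add_one_mem_nbrs {n : ℕ} (hn : 0 < n) (i : ℤ) :
    i - 2*(n:ℤ) + 1 ∈ nbrs n i := by
  rw [mem_nbrs]; omega

lemma add_two_mul_add_one_notMem_nbrs (n : ℕ) (i : ℤ) : i + 2*(n:ℤ) + 1 ∉ nbrs n i := by
  rw [mem_nbrs]; omega

lemma nbrs_add_two {n : ℕ} (hn : 0 < n) (i : ℤ) :
    nbrs n (i + 2) = insert (i + 2*(n:ℤ) + 1) ((nbrs n i).erase (i - 2*(n:ℤ) + 1)) := by
  ext j
  simp only [mem_nbrs, Finset.mem_insert, Finset.mem_erase]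
  omega

lemma Finset.card_filter_insert_of_notMem {α : Type*} [DecidableEq α] (p : α → Prop)
    [DecidablePred p] {a : α} {s : Finset α} (ha : a ∉ s) :
    ((insert a s).filter p).card = (s.filter p).card + if p a then 1 else 0 := by
  rw [Finset.filter_insert]
  split_ifs
  · exact Finset.card_insert_of_notMem fun h => ha (Finset.mem_of_mem_filter a h)
  · rfl

lemma Fin.two_ne_iff_eq {u v w : Fin 2} (huv : u ≠ v) : w ≠ u ↔ w = v := by
  revert u v w; decide

lemma card_filter_ne_add_card_filter_ne {α : Type*} (φ : α → Fin 2) {u v : Fin 2} (huv : u ≠ v)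
    (s : Finset α) :
    (s.filter (φ · ≠ u)).card + (s.filter (φ · ≠ v)).card = s.card := by
  simp only [Fin.two_ne_iff_eq huv, Finset.card_filter_add_card_filter_not]

section Perfect2

variable {n b c : ℕ} {φ : ℤ → Fin 2}

lemma Perfect2.card_filter_ne_self (hφ : Perfect2 n φ b c) (i : ℤ) :
    ((nbrs n i).filter (φ · ≠ φ i)).card = if φ i = 0 then b else c := by
  obtain hi | hi : φ i = 0 ∨ φ i = 1 := by omega
  · simpa [hi, Fin.two_ne_iff_eq zero_ne_one] using hφ.1 i hi
  · simpa [hi, Fin.two_ne_iff_eq one_ne_zero] using hφ.2 i hi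

lemma Perfect2.card_filter_ne_add_of_ne (hφ : Perfect2 n φ b c) {i j : ℤ} (h : φ i ≠ φ j) :
    ((nbrs n i).filter (φ · ≠ φ i)).card + ((nbrs n j).filter (φ · ≠ φ j)).card = b + c := by
  rw [hφ.card_filter_ne_self, hφ.card_filter_ne_self]
  split_ifs <;> omega

end Perfect2

theorem neq_pattern_minus_general (n b c : ℕ) (hn : 0 < n)
    (hbc : b + c = 2*n - 1)
    (φ : ℤ → Fin 2) (hφ : Perfect2 n φ b c)
    (i : ℤ) (h : φ i ≠ φ (i + 2)) :
    φ (i - 2*(n:ℤ) + 1) = φ i ∧ φ (i + 2*(n:ℤ) + 1) = φ (i + 2) := by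
  set x := i - 2*(n:ℤ) + 1
  set y := i + 2*(n:ℤ) + 1
  set S := (nbrs n i).erase x
  have hx : x ∈ nbrs n i := sub_two_mul_add_one_mem_nbrs hn i
  have hA : nbrs n i = insert x S := (Finset.insert_erase hx).symm
  have hB : nbrs n (i + 2) = insert y S := nbrs_add_two hn i
  have hxS : x ∉ S := Finset.notMem_erase x _
  have hyS : y ∉ S := fun hy => add_two_mul_add_one_notMem_nbrs n i (Finset.mem_of_mem_erase hy)
  have hS : S.card = 2 * n - 1 := by rw [Finset.card_erase_of_mem hx, card_nbrs]
  have hdeg := hφ.card_filter_ne_add_of_ne h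
  rw [hA, hB, Finset.card_filter_insert_of_notMem _ hxS,
    Finset.card_filter_insert_of_notMem _ hyS] at hdeg
  have hsplit := card_filter_ne_add_card_filter_ne φ h S
  have hext : (if φ x ≠ φ i then 1 else 0) + (if φ y ≠ φ (i + 2) then 1 else 0) = 0 := by omega
  simpa using hext

/-- If `b + c = 2n-1` and `φ(i) ≠ φ(i+2)`, then `φ(i-2n+1) = φ(i)`
and `φ(i+2n+1) = φ(i+2)`. -/
theorem neq_pattern_minus (n b c : ℕ) (hn : 0 < n) (hb : 0 < b) (hc : 0 < c)
    (hbc : b + c = 2*n - 1)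
    (φ : ℤ → Fin 2) (hφ : Perfect2 n φ b c)
    (i : ℤ) (h : φ i ≠ φ (i + 2)) :
    φ (i - 2*(n:ℤ) + 1) = φ i ∧ φ (i + 2*(n:ℤ) + 1) = φ (i + 2) :=
  neq_pattern_minus_general n b c hn hbc φ hφ i h
end

section
/- Every perfect non-bipartite 2-coloring of Ci_∞(D_n) whose outer degrees b, c satisfy b + c = 2n - 1 is periodic with period length 2n - 1, i.e., φ(i) = φ(i + 2n - 1) for all integers i. -/
/-! Let `a x ∈ {0, 1}` indicate colour 1. Since `b + c = 2n - 1`, every vertex `i` has exactly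
`b + a i` neighbours of colour 1. Comparing the neighbourhoods of `i` and `i + 2` shows that
`g x = a (x + 2n - 1) - a x` is antiperiodic with antiperiod `2n + 1`, and an alternating sum of
shifts of `g` gives `h`, antiperiodic with the same antiperiod, with `a = u + h` where `u` has
period `2n - 1`. Since `2n - 1` and `2(2n + 1)` are coprime, `u` and `h` take their values
independently, so `u i ± h r ∈ {0, 1}` for all `i, r`: either `h = 0`, and `a = u` is periodic, or
`u = 1/2`, so `a (x + 2n + 1) = 1 - a x`; then counting the colour-1 neighbours of `0` and of
`2n + 1` gives `2n = 2b + 1`, which is absurd. -/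

open Finset Function

lemma isCoprime_two_mul_sub_one_two_mul_two_mul_add_one (n : ℤ) :
    IsCoprime (2 * n - 1) (2 * (2 * n + 1)) :=
  IsCoprime.mul_right ⟨-1, n, by ring⟩ ⟨n, 1 - n, by ring⟩

lemma exists_apply_eq_and_apply_eq_of_isCoprime {α β : Type*} {u : ℤ → α} {v : ℤ → β} {m q : ℤ}
    (hu : Periodic u m) (hv : Periodic v q) (hmq : IsCoprime m q) (i r : ℤ) :
    ∃ x, u x = u i ∧ v x = v r := by
  obtain ⟨s, t, hst⟩ := hmq
  refine ⟨i + s * (r - i) * m, hu.int_mul _ i, ?_⟩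
  rw [show i + s * (r - i) * m = r + t * (i - r) * q by linear_combination (r - i) * hst]
  exact hv.int_mul _ r

lemma forall_eq_zero_or_forall_eq_half {ι κ : Type*} {u : ι → ℚ} {v : κ → ℚ}
    (hadd : ∀ i r, u i + v r = 0 ∨ u i + v r = 1) (hsub : ∀ i r, u i - v r = 0 ∨ u i - v r = 1) :
    (∀ r, v r = 0) ∨ ∀ i, u i = 1 / 2 := by
  by_contra! ⟨⟨r, hr⟩, i, hi⟩
  rcases hadd i r with h₁ | h₁ <;> rcases hsub i r with h₂ | h₂ <;>
    first | exact hr (by linarith) | exact hi (by linarith)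

lemma exists_antiperiodic_apply_add_apply_add_two_eq {G : ℤ → ℚ} {k : ℕ}
    (hG : Antiperiodic G (2 * k + 1)) :
    ∃ h : ℤ → ℚ, Antiperiodic h (2 * k + 1) ∧ ∀ y, h y + h (y + 2) = G y := by
  refine ⟨fun y => 2⁻¹ * ∑ j ∈ range (2 * k + 1), (-1) ^ j * G (y + 2 * j), fun y => ?_,
    fun y => ?_⟩
  · rw [← mul_neg, ← sum_neg_distrib]
    refine congrArg _ (sum_congr rfl fun j _ => ?_)
    rw [show y + (2 * k + 1) + 2 * j = y + 2 * j + (2 * k + 1) by ring, hG]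
    ring
  · have htel := sum_range_sub' (fun j : ℕ => (-1 : ℚ) ^ j * G (y + 2 * j)) (2 * k + 1)
    have hlast : (-1 : ℚ) ^ (2 * k + 1) * G (y + 2 * ((2 * k + 1 : ℕ) : ℤ)) = -G y := by
      rw [Odd.neg_one_pow ⟨k, rfl⟩, show y + 2 * ((2 * k + 1 : ℕ) : ℤ) = y + 2 * (2 * k + 1) by
        push_cast; ring, hG.periodic_two_mul]
      ring
    have hshift : ∀ j : ℕ, (-1 : ℚ) ^ (j + 1) * G (y + 2 * ((j + 1 : ℕ) : ℤ)) =
        -((-1) ^ j * G (y + 2 + 2 * j)) := fun j => by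
      rw [pow_succ, show y + 2 * ((j + 1 : ℕ) : ℤ) = y + 2 + 2 * j by push_cast; ring]
      ring
    beta_reduce at htel
    rw [hlast, sum_congr rfl fun j _ => by rw [hshift], Nat.cast_zero, mul_zero, add_zero,
      pow_zero, one_mul] at htel
    simp only [sub_neg_eq_add, sum_add_distrib] at htel
    linear_combination 2⁻¹ * htel

lemma exists_antiperiodic_apply_add_sub_apply_eq {g : ℤ → ℚ} {k : ℕ}
    (hg : Antiperiodic g (2 * k + 1)) :
    ∃ h : ℤ → ℚ, Antiperiodic h (2 * k + 1) ∧ ∀ x, h (x + (2 * k - 1)) - h x = g x := by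
  obtain ⟨h, hh, hsum⟩ := exists_antiperiodic_apply_add_apply_add_two_eq (hg.sub_const (2 * k - 1))
  refine ⟨h, hh, fun x => ?_⟩
  have := hsum (x + (2 * k - 1))
  rw [show x + (2 * k - 1) + 2 = x + (2 * k + 1) by ring, hh,
    show x + (2 * k - 1) - (2 * k - 1) = x by ring] at this
  linarith

lemma nbrs_eq_image (n : ℕ) (i : ℤ) :
    nbrs n i = (range (2 * n)).image fun j : ℕ => i - (2 * n - 1) + 2 * j := by
  ext x
  simp only [nbrs, mem_filter, mem_Icc, mem_image, mem_range]
  constructor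
  · rintro ⟨⟨hl, hr⟩, t, ht⟩
    exact ⟨(t + n).toNat, by omega, by omega⟩
  · rintro ⟨j, hj, rfl⟩
    exact ⟨⟨by omega, by omega⟩, ⟨(j : ℤ) - n, by omega⟩⟩

lemma card_filter_nbrs_eq_one {n b c : ℕ} (hn : 0 < n) (hbc : b + c = 2 * n - 1)
    {φ : ℤ → Fin 2} (hφ : Perfect2 n φ b c) (i : ℤ) :
    #((nbrs n i).filter (φ · = 1)) = b + (φ i).val := by
  rcases Fin.exists_fin_two.mp ⟨φ i, rfl⟩ with hi | hi
  · rw [hφ.1 i hi, hi]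
    rfl
  · have hcard : #(nbrs n i) = 2 * n := by
      rw [nbrs_eq_image, card_image_of_injective _ fun p q h => by simpa using h, card_range]
    have hsplit := card_filter_add_card_filter_not (s := nbrs n i) (φ · = 1)
    rw [filter_congr fun j _ => (by decide : ∀ x : Fin 2, x ≠ 1 ↔ x = 0) (φ j), hφ.2 i hi,
      hcard] at hsplit
    rw [hi]
    simp only [Fin.isValue, Fin.val_one]
    omega

lemma sum_val_nbrs {n b c : ℕ} (hn : 0 < n) (hbc : b + c = 2 * n - 1)
    {φ : ℤ → Fin 2} (hφ : Perfect2 n φ b c) (i : ℤ) :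
    ∑ j ∈ range (2 * n), ((φ (i - (2 * n - 1) + 2 * j)).val : ℚ) = b + (φ i).val := by
  have hval : ∀ x, ((φ x).val : ℚ) = if φ x = 1 then 1 else 0 := fun x => by
    rcases Fin.exists_fin_two.mp ⟨φ x, rfl⟩ with h | h <;> simp [h]
  rw [← sum_image (f := fun x => ((φ x).val : ℚ)) fun p _ q _ h => by simpa using h,
    ← nbrs_eq_image]
  simp only [hval, sum_boole, card_filter_nbrs_eq_one hn hbc hφ]
  push_cast
  rw [← hval]

lemma antiperiodic_sub_of_sum_nbrs {n b : ℕ} {a : ℤ → ℚ}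
    (hsum : ∀ i, ∑ j ∈ range (2 * n), a (i - (2 * n - 1) + 2 * j) = b + a i) :
    Antiperiodic (fun x => a (x + (2 * n - 1)) - a x) (2 * n + 1) := fun x => by
  have h₁ := hsum (x + (2 * n - 1))
  have h₂ := hsum (x + (2 * n + 1))
  rw [sum_congr rfl fun (j : ℕ) _ => congrArg a
    (show x + (2 * n - 1) - (2 * n - 1) + 2 * j = x + 2 * j by ring)] at h₁
  rw [sum_congr rfl fun (j : ℕ) _ => congrArg a
    (show x + (2 * n + 1) - (2 * n - 1) + 2 * j = x + 2 * ((j + 1 : ℕ) : ℤ) by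
      push_cast; ring)] at h₂
  have e₁ := sum_range_succ (fun j : ℕ => a (x + 2 * j)) (2 * n)
  have e₂ := sum_range_succ' (fun j : ℕ => a (x + 2 * j)) (2 * n)
  rw [show x + 2 * ((2 * n : ℕ) : ℤ) = x + (2 * n + 1) + (2 * n - 1) by push_cast; ring] at e₁
  rw [Nat.cast_zero, mul_zero, add_zero] at e₂
  beta_reduce
  linarith

lemma not_forall_add_eq_one_sub_of_sum_nbrs {n b : ℕ} {a : ℤ → ℚ}
    (hsum : ∀ i, ∑ j ∈ range (2 * n), a (i - (2 * n - 1) + 2 * j) = b + a i) :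
    ¬ ∀ x, a (x + (2 * n + 1)) = 1 - a x := by
  intro hflip
  have h₁ := hsum (2 * n + 1)
  rw [sum_congr rfl fun j _ => by
      rw [show (2 * n + 1 : ℤ) - (2 * n - 1) + 2 * j = 0 - (2 * n - 1) + 2 * j + (2 * n + 1) by
        ring, hflip],
    sum_sub_distrib, hsum 0, ← zero_add (2 * (n : ℤ) + 1), hflip] at h₁
  simp only [sum_const, card_range, nsmul_eq_mul, mul_one] at h₁
  have : ((2 * n : ℕ) : ℚ) = ((2 * b + 1 : ℕ) : ℚ) := by push_cast at h₁ ⊢; linarith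
  have : 2 * n = 2 * b + 1 := by exact_mod_cast this
  omega

theorem periodic_of_sum_nbrs {n b : ℕ} {a : ℤ → ℚ} (ha : ∀ x, a x = 0 ∨ a x = 1)
    (hsum : ∀ i, ∑ j ∈ range (2 * n), a (i - (2 * n - 1) + 2 * j) = b + a i) :
    Periodic a (2 * n - 1) := by
  obtain ⟨h, hh, hdiff⟩ :=
    exists_antiperiodic_apply_add_sub_apply_eq (antiperiodic_sub_of_sum_nbrs hsum)
  set u := fun x => a x - h x with hu_def
  have hu : Periodic u (2 * n - 1) := fun x => by
    have := hdiff x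
    simp only [hu_def]
    linarith
  have hadd : ∀ i r, u i + h r = 0 ∨ u i + h r = 1 := fun i r => by
    obtain ⟨x, hux, hhx⟩ := exists_apply_eq_and_apply_eq_of_isCoprime hu hh.periodic_two_mul
      (isCoprime_two_mul_sub_one_two_mul_two_mul_add_one n) i r
    rw [← hux, ← hhx, sub_add_cancel]
    exact ha x
  have hsub : ∀ i r, u i - h r = 0 ∨ u i - h r = 1 := fun i r => by
    simpa [hh r, ← sub_eq_add_neg] using hadd i (r + (2 * n + 1))
  rcases forall_eq_zero_or_forall_eq_half hadd hsub with h0 | hhalf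
  · intro x
    linarith [hdiff x, h0 x, h0 (x + (2 * n - 1))]
  · refine absurd (fun x => ?_) (not_forall_add_eq_one_sub_of_sum_nbrs hsum)
    have h₁ := hhalf x
    have h₂ := hhalf (x + (2 * n + 1))
    simp only [hu_def, hh x] at h₁ h₂
    linarith

theorem period_minus_general (n b c : ℕ) (hn : 0 < n)
    (hbc : b + c = 2*n - 1)
    (φ : ℤ → Fin 2) (hφ : Perfect2 n φ b c) :
    ∀ i : ℤ, φ (i + (2*(n:ℤ) - 1)) = φ i := by
  have hval : ∀ x, ((φ x).val : ℚ) = 0 ∨ ((φ x).val : ℚ) = 1 := fun x => by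
    rcases Fin.exists_fin_two.mp ⟨φ x, rfl⟩ with h | h <;> simp [h]
  have hper := periodic_of_sum_nbrs hval (sum_val_nbrs hn hbc hφ)
  exact fun i => Fin.val_injective (Nat.cast_injective (R := ℚ) (hper i))

/-- Every perfect non-bipartite 2-coloring with `b + c = 2n-1` has period `2n-1`. -/
theorem period_minus (n b c : ℕ) (hn : 0 < n) (hb : 0 < b) (hc : 0 < c)
    (hbc : b + c = 2*n - 1)
    (φ : ℤ → Fin 2) (hφ : Perfect2 n φ b c)
    (hnonbip : ¬ (∀ i j : ℤ, Even i → Odd j → φ i ≠ φ j)) :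
    ∀ i : ℤ, φ (i + (2*(n:ℤ) - 1)) = φ i :=
  period_minus_general n b c hn hbc φ hφ
end
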